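/- arXiv:2312.09137 — 5 statements merged into one kernel-verified Lean document; each statement's English description precedes it below -/
import Mathlib

section
/- Let f(x) = Σ_{d=-D}^D c_d e^{2πidx} with c_d = c_{-d}, c_0 = 0, and c_d ≥ 0 for all d ∈ {1,…,D}, f not identically zero. Let (a_n) be any sequence of positive integers, U ~ Unif(0,1), and S_n = Σ_{j=1}^n f(a_j U). Then E[S_n^2] ≥ 2n Σ_{d=1}^D c_d^2 > 0 for all n. -/
/-!
Using the symmetry `c (-d) = c d` and `c 0 = 0`, write `S_n(x)` as a cosine sum
`∑_{j,d} 2 c_d cos(2π d a_j x)` over the pairs `(j, d) ∈ [1,n] × [1,D]`, all of whose frequencies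
`d a_j` are positive integers. Expanding the square, each cross term integrates to
`c_d c_e ([d a_j = e a_k] + [d a_j = -e a_k]) / 2 ≥ 0` because the coefficients are nonnegative,
so dropping all off-diagonal terms leaves `∑_{j,d} (2 c_d)^2 / 2 = 2 n ∑_d c_d^2`.
-/

open Real Finset MeasureTheory

lemma Finset.sum_Icc_neg_of_even {M : Type*} [AddCommMonoid M] {g : ℤ → M}
    (heven : ∀ d, g (-d) = g d) (hzero : g 0 = 0) (D : ℕ) :
    ∑ d ∈ Icc (-D : ℤ) D, g d = 2 • ∑ d ∈ Icc (1 : ℤ) D, g d := by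
  induction D with
  | zero => simp [hzero]
  | succ D ih =>
    rw [Nat.cast_add, Nat.cast_one, Icc_succ_succ, sum_union (by simp), sum_pair (by lia), ih,
      heven, ← insert_Icc_right_eq_Icc_add_one (by lia), sum_insert (by simp)]
    abel

lemma integral_cos_two_pi_int_mul (k : ℤ) :
    ∫ x in (0 : ℝ)..1, cos (2 * π * k * x) = if k = 0 then 1 else 0 := by
  split_ifs with hk
  · simp [hk]
  · have hk' : (2 * π * k : ℝ) ≠ 0 := by positivity
    have hsin : sin (2 * π * k) = 0 := by
      rw [show 2 * π * k = ((2 * k : ℤ) : ℝ) * π by push_cast; ring, sin_int_mul_pi]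
    simp [intervalIntegral.integral_comp_mul_left (fun x => cos x) hk', hsin]

lemma integral_cos_mul_cos_two_pi_int_mul (m m' : ℤ) :
    ∫ x in (0 : ℝ)..1, cos (2 * π * m * x) * cos (2 * π * m' * x)
      = ((if m = m' then 1 else 0) + (if m = -m' then 1 else 0)) / 2 := by
  have hprod (x : ℝ) : cos (2 * π * m * x) * cos (2 * π * m' * x)
      = (cos (2 * π * ↑(m - m') * x) + cos (2 * π * ↑(m + m') * x)) / 2 := by
    rw [show 2 * π * ↑(m - m') * x = 2 * π * m * x - 2 * π * m' * x by push_cast; ring,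
      show 2 * π * ↑(m + m') * x = 2 * π * m * x + 2 * π * m' * x by push_cast; ring,
      cos_sub, cos_add]
    ring
  have hcont (k : ℤ) : IntervalIntegrable (fun x : ℝ => cos (2 * π * k * x)) volume 0 1 :=
    (continuous_cos.comp (continuous_const.mul continuous_id)).intervalIntegrable _ _
  simp_rw [hprod, intervalIntegral.integral_div, intervalIntegral.integral_add (hcont _) (hcont _),
    integral_cos_two_pi_int_mul, sub_eq_zero, add_eq_zero_iff_eq_neg]

lemma sum_sq_div_two_le_integral_sq_sum_cos {ι : Type*} (s : Finset ι) (w : ι → ℝ) (m : ι → ℤ)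
    (hw : ∀ i ∈ s, 0 ≤ w i) (hm : ∀ i ∈ s, m i ≠ 0) :
    (∑ i ∈ s, w i ^ 2) / 2 ≤ ∫ x in (0 : ℝ)..1, (∑ i ∈ s, w i * cos (2 * π * m i * x)) ^ 2 := by
  set I : ι → ι → ℝ := fun i j => ∫ x in (0 : ℝ)..1, cos (2 * π * m i * x) * cos (2 * π * m j * x)
  have hI_nonneg (i j : ι) : 0 ≤ I i j := by
    simp only [I, integral_cos_mul_cos_two_pi_int_mul]
    positivity
  have hI_diag : ∀ i ∈ s, I i i = 1 / 2 := fun i hi => by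
    have hmi : m i ≠ -m i := by have := hm i hi; lia
    simp [I, integral_cos_mul_cos_two_pi_int_mul, hmi]
  have hcont (i : ι) : Continuous fun x : ℝ => cos (2 * π * m i * x) :=
    continuous_cos.comp (continuous_const.mul continuous_id)
  have hexpand : ∫ x in (0 : ℝ)..1, (∑ i ∈ s, w i * cos (2 * π * m i * x)) ^ 2
      = ∑ i ∈ s, ∑ j ∈ s, w i * w j * I i j := by
    simp_rw [sq, sum_mul_sum]
    rw [intervalIntegral.integral_finsetSum fun i _ => ?_]
    · refine sum_congr rfl fun i _ => ?_
      rw [intervalIntegral.integral_finsetSum fun j _ => ?_]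
      · refine sum_congr rfl fun j _ => ?_
        rw [← intervalIntegral.integral_const_mul]
        congr 1 with x
        ring
      · exact (by fun_prop : Continuous _).intervalIntegrable _ _
    · exact (by fun_prop : Continuous _).intervalIntegrable _ _
  rw [hexpand, sum_div]
  refine sum_le_sum fun i hi => ?_
  calc w i ^ 2 / 2 = w i * w i * I i i := by rw [hI_diag i hi]; ring
    _ ≤ ∑ j ∈ s, w i * w j * I i j :=
      single_le_sum (f := fun j => w i * w j * I i j)
        (fun j hj => mul_nonneg (mul_nonneg (hw i hi) (hw j hj)) (hI_nonneg i j)) hi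

open Real in
/-- If additionally the coefficients `c_d`, `d ∈ {1,…,D}`, are nonnegative and `f ≢ 0`, then
for every `n ≥ 1`, `E[S_n ^ 2] ≥ 2 n ∑_{d=1}^D c_d ^ 2 > 0`. -/
theorem stmt3 (D : ℕ) (c : ℤ → ℝ) (hsym : ∀ d, c (-d) = c d) (h0 : c 0 = 0)
    (hnn : ∀ d ∈ Finset.Icc (1:ℤ) D, 0 ≤ c d)
    (hne : ∃ d ∈ Finset.Icc (1:ℤ) D, c d ≠ 0)
    (f : ℝ → ℝ)
    (hf : ∀ x, f x = ∑ d ∈ Finset.Icc (-(D:ℤ)) D, c d * Real.cos (2 * π * d * x))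
    (a : ℕ → ℕ) (hpos : ∀ n, 0 < a n) (n : ℕ) (hn : 1 ≤ n) :
    0 < 2 * (n : ℝ) * ∑ d ∈ Finset.Icc (1:ℤ) D, (c d) ^ 2 ∧
    2 * (n : ℝ) * ∑ d ∈ Finset.Icc (1:ℤ) D, (c d) ^ 2
      ≤ ∫ x in (0:ℝ)..1, (∑ j ∈ Finset.Icc 1 n, f (a j * x)) ^ 2 := by
  obtain ⟨d₀, hd₀, hcd₀⟩ := hne
  have hn' : (0 : ℝ) < n := by exact_mod_cast hn
  refine ⟨mul_pos (by positivity) (sum_pos' (fun d _ => sq_nonneg _) ⟨d₀, hd₀, by positivity⟩), ?_⟩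
  have hf_pos (x : ℝ) : f x = ∑ d ∈ Icc (1 : ℤ) D, 2 * c d * cos (2 * π * d * x) := by
    have heven (d : ℤ) : c (-d) * cos (2 * π * ↑(-d) * x) = c d * cos (2 * π * d * x) := by
      simp only [hsym, Int.cast_neg, mul_neg, neg_mul, cos_neg]
    rw [hf, sum_Icc_neg_of_even heven (by simp [h0]), nsmul_eq_mul, mul_sum]
    simp only [Nat.cast_ofNat, mul_assoc]
  have hS (x : ℝ) : ∑ j ∈ Icc 1 n, f (a j * x)
      = ∑ p ∈ Icc 1 n ×ˢ Icc (1 : ℤ) D, 2 * c p.2 * cos (2 * π * ↑(p.2 * a p.1) * x) := by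
    rw [sum_product]
    refine sum_congr rfl fun j _ => ?_
    rw [hf_pos]
    refine sum_congr rfl fun d _ => ?_
    push_cast
    ring_nf
  have hbound := sum_sq_div_two_le_integral_sq_sum_cos (Icc 1 n ×ˢ Icc (1 : ℤ) D)
    (fun p => 2 * c p.2) (fun p => p.2 * a p.1)
    (fun p hp => by have := hnn p.2 (mem_product.mp hp).2; positivity)
    (fun p hp => by have := (mem_Icc.mp (mem_product.mp hp).2).1; have := hpos p.1; positivity)
  simp_rw [hS]
  refine le_trans (le_of_eq ?_) hbound
  simp only [sum_product, mul_pow, ← mul_sum, sum_const, Nat.card_Icc, Nat.add_sub_cancel,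
    nsmul_eq_mul]
  ring
end

section
/- Let D ≥ 1, M ∈ ℕ, and let (a_n) be a sequence of positive integers such that a_{n+1}/a_n ∈ {2,3,…} for all n. Set k = ⌈log(MD)/log 2⌉. Suppose V_1, V_2 ⊆ ℕ are nonempty disjoint sets with |v - w| ≥ k+1 for all v ∈ V_1, w ∈ V_2. Then any solution of Σ_{i=1}^r ε_i a_{v_i} + Σ_{j=1}^s η_j a_{w_j} = 0 with v_i ∈ V_1, w_j ∈ V_2, ε_i, η_j ∈ {-D,…,D}, and r + s ≤ M, splits: Σ_{i=1}^r ε_i a_{v_i} = 0 and Σ_{j=1}^s η_j a_{w_j} = 0. -/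
/-!
The choice of `k` gives `M D ≤ 2 ^ k`. Since `a m` divides every `a n` with `n ≥ m`, while the
terms of the sum with index at most `m - k - 1` add up to at most
`M D a (m - k - 1) ≤ 2 ^ k a (m - k - 1) ≤ a m / 2` in absolute value, a vanishing sum stays zero
when it is cut at an index `m` preceded by a gap of length `k`.
The indices from `V₁` and from `V₂` form alternating blocks separated by such gaps; cutting off
the lowest block and inducting shows that the sum over each colour vanishes.
-/
open Finset

theorem Int.eq_zero_of_dvd_of_two_mul_abs_le {x y : ℤ} (hxy : x ∣ y) (h : 2 * |y| ≤ |x|) :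
    y = 0 := by
  by_contra hy
  have hyx : |x| ≤ |y| := Int.le_of_dvd (abs_pos.2 hy) ((abs_dvd_abs x y).2 hxy)
  have : 0 < |y| := abs_pos.2 hy
  linarith

theorem Nat.le_two_pow_ceil_log_div_log_two (n : ℕ) :
    n ≤ 2 ^ ⌈Real.log n / Real.log 2⌉₊ := by
  rw [Real.log_div_log, show (2 : ℝ) = (2 : ℕ) by norm_num, Real.natCeil_logb_natCast]
  exact Nat.le_pow_clog one_lt_two n

section Lacunary

variable {a : ℕ → ℕ}

theorem two_pow_mul_le_of_add_le (hgap : ∀ n, 2 * a n ≤ a (n + 1)) {p q t : ℕ}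
    (h : p + t ≤ q) : 2 ^ t * a p ≤ a q := by
  have hmono : Monotone a := monotone_nat_of_le_succ fun n => by linarith [hgap n]
  refine le_trans ?_ (hmono h)
  induction t with
  | zero => simp
  | succ t ih =>
    rw [pow_succ', mul_assoc]
    exact (Nat.mul_le_mul_left 2 (ih (by omega))).trans (hgap _)

theorem two_pow_mul_abs_sum_filter_lt_le (hgap : ∀ n, 2 * a n ≤ a (n + 1)) {ι : Type*}
    {s : Finset ι} {D k : ℕ} {n : ι → ℕ} {c : ι → ℤ} (hc : ∀ i ∈ s, |c i| ≤ D) {m : ℕ}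
    (hm : ∀ i ∈ s, n i < m → n i + (k + 1) ≤ m) :
    2 ^ (k + 1) * |∑ i ∈ s with n i < m, c i * a (n i)| ≤ #s * D * a m := by
  have hterm : ∀ i ∈ s.filter (n · < m), 2 ^ (k + 1) * |c i * a (n i)| ≤ D * a m := by
    intro i hi
    obtain ⟨his, hlt⟩ := mem_filter.1 hi
    have : 2 ^ (k + 1) * a (n i) ≤ a m := two_pow_mul_le_of_add_le hgap (hm i his hlt)
    rw [abs_mul, Nat.abs_cast, mul_left_comm]
    exact mul_le_mul (hc i his) (by exact_mod_cast this) (by positivity) (by positivity)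
  calc 2 ^ (k + 1) * |∑ i ∈ s with n i < m, c i * a (n i)|
      ≤ ∑ i ∈ s with n i < m, 2 ^ (k + 1) * |c i * a (n i)| := by
        rw [← mul_sum]; exact mul_le_mul_of_nonneg_left (abs_sum_le_sum_abs _ _) (by positivity)
    _ ≤ #(s.filter (n · < m)) * (D * a m) := by
        rw [← nsmul_eq_mul, ← sum_const]; exact sum_le_sum hterm
    _ ≤ #s * D * a m := by
        rw [← mul_assoc]
        gcongr
        exact filter_subset _ _

theorem sum_filter_lt_eq_zero_of_gap (hdvd : ∀ n, a n ∣ a (n + 1))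
    (hgap : ∀ n, 2 * a n ≤ a (n + 1)) {ι : Type*} {s : Finset ι} {D k : ℕ}
    (hsD : #s * D ≤ 2 ^ k) {n : ι → ℕ} {c : ι → ℤ} (hc : ∀ i ∈ s, |c i| ≤ D)
    (hsum : ∑ i ∈ s, c i * a (n i) = 0) {m : ℕ} (hm : ∀ i ∈ s, n i < m → n i + (k + 1) ≤ m) :
    ∑ i ∈ s with n i < m, c i * a (n i) = 0 := by
  have hhigh : (a m : ℤ) ∣ ∑ i ∈ s with ¬ n i < m, c i * a (n i) := by
    refine dvd_sum fun i hi => dvd_mul_of_dvd_right ?_ _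
    exact Int.natCast_dvd_natCast.2 <|
      Nat.rel_of_forall_rel_succ_of_le (· ∣ ·) hdvd (not_lt.1 (mem_filter.1 hi).2)
  have hlow : (a m : ℤ) ∣ ∑ i ∈ s with n i < m, c i * a (n i) := by
    refine (dvd_add_left hhigh).1 ?_
    rw [sum_filter_add_sum_filter_not, hsum]
    exact dvd_zero _
  refine Int.eq_zero_of_dvd_of_two_mul_abs_le hlow <|
    le_of_mul_le_mul_left ?_ (by positivity : (0 : ℤ) < 2 ^ k)
  calc 2 ^ k * (2 * |∑ i ∈ s with n i < m, c i * a (n i)|)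
      = 2 ^ (k + 1) * |∑ i ∈ s with n i < m, c i * a (n i)| := by ring
    _ ≤ #s * D * a m := two_pow_mul_abs_sum_filter_lt_le hgap hc hm
    _ ≤ 2 ^ k * |(a m : ℤ)| := by
        rw [Nat.abs_cast]
        gcongr
        exact_mod_cast hsD

theorem sum_filter_eq_zero_of_forall_eq {ι κ M : Type*} [DecidableEq κ] [AddCommMonoid M]
    {t : Finset ι} {f : ι → M} {col : ι → κ} {b₀ : κ} (hcol : ∀ i ∈ t, col i = b₀)
    (ht : ∑ i ∈ t, f i = 0) (b : κ) : ∑ i ∈ t with col i = b, f i = 0 := by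
  by_cases hb : b₀ = b
  · rw [filter_true_of_mem fun i hi => (hcol i hi).trans hb, ht]
  · rw [filter_false_of_mem fun i hi => (hcol i hi).trans_ne hb, sum_empty]

theorem sum_filter_eq_zero_of_separated (hdvd : ∀ n, a n ∣ a (n + 1))
    (hgap : ∀ n, 2 * a n ≤ a (n + 1)) {ι κ : Type*} [DecidableEq κ] {D k : ℕ} {n : ι → ℕ}
    {c : ι → ℤ} (col : ι → κ) (s : Finset ι) (hsD : #s * D ≤ 2 ^ k)
    (hc : ∀ i ∈ s, |c i| ≤ D)
    (hsep : ∀ i ∈ s, ∀ j ∈ s, col i ≠ col j → (k : ℤ) + 1 ≤ |(n i : ℤ) - n j|)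
    (hsum : ∑ i ∈ s, c i * a (n i) = 0) (b : κ) :
    ∑ i ∈ s with col i = b, c i * a (n i) = 0 := by
  induction s using Finset.strongInduction with
  | H s ih =>
  obtain rfl | hs := s.eq_empty_or_nonempty
  · simp
  obtain ⟨i₀, hi₀, hi₀min⟩ := s.exists_min_image n hs
  by_cases hmono : ∀ i ∈ s, col i = col i₀
  · exact sum_filter_eq_zero_of_forall_eq hmono hsum b
  have hother : (s.filter (col · ≠ col i₀)).Nonempty := by
    obtain ⟨j, hj, hjc⟩ := not_forall₂.1 hmono
    exact ⟨j, mem_filter.2 ⟨hj, hjc⟩⟩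
  obtain ⟨j₀, hj₀, hj₀min⟩ := (s.filter (col · ≠ col i₀)).exists_min_image n hother
  obtain ⟨hj₀s, hj₀c⟩ := mem_filter.1 hj₀
  set m := n j₀
  have hgap_below : ∀ i ∈ s, col i ≠ col j₀ → n i ≤ m → n i + (k + 1) ≤ m := by
    intro i hi hne hle
    have := hsep i hi j₀ hj₀s hne
    rw [abs_sub_comm, abs_of_nonneg (by omega)] at this
    omega
  have hcol_below : ∀ i ∈ s, n i < m → col i = col i₀ := fun i hi hlt => by
    by_contra h
    exact (hj₀min i (mem_filter.2 ⟨hi, h⟩)).not_gt hlt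
  have hL : ∑ i ∈ s with n i < m, c i * a (n i) = 0 :=
    sum_filter_lt_eq_zero_of_gap hdvd hgap hsD hc hsum fun i hi hlt =>
      hgap_below i hi ((hcol_below i hi hlt).trans_ne (Ne.symm hj₀c)) hlt.le
  have hH : ∑ i ∈ s with ¬ n i < m, c i * a (n i) = 0 := by
    rwa [← sum_filter_add_sum_filter_not s (n · < m), hL, zero_add] at hsum
  have hHs : s.filter (¬ n · < m) ⊂ s := by
    refine filter_ssubset.2 ⟨i₀, hi₀, not_not.2 ?_⟩
    have := hgap_below i₀ hi₀ (Ne.symm hj₀c) (hi₀min j₀ hj₀s)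
    omega
  have hsub := hHs.subset
  have hH_b := ih _ hHs ((Nat.mul_le_mul_right D (card_le_card hsub)).trans hsD)
    (fun i hi => hc i (hsub hi)) (fun i hi j hj => hsep i (hsub hi) j (hsub hj)) hH
  have hL_b := sum_filter_eq_zero_of_forall_eq (t := s.filter (n · < m))
    (fun i hi => hcol_below i (mem_filter.1 hi).1 (mem_filter.1 hi).2) hL b
  rw [← sum_filter_add_sum_filter_not _ (n · < m), filter_comm, filter_comm (p := (col · = b)),
    hL_b, hH_b, add_zero]

end Lacunary

theorem stmt7_general (D M : ℕ) (a : ℕ → ℕ)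
    (hdvd : ∀ n, a n ∣ a (n + 1)) (hgap : ∀ n, 2 * a n ≤ a (n + 1))
    (k : ℕ) (hk : k = ⌈Real.log (M * D) / Real.log 2⌉₊) (V₁ V₂ : Set ℕ)
    (hsep : ∀ v ∈ V₁, ∀ w ∈ V₂, (k : ℤ) + 1 ≤ |(v : ℤ) - (w : ℤ)|)
    (r s : ℕ) (hrs : r + s ≤ M)
    (v : Fin r → ℕ) (hv : ∀ i, v i ∈ V₁) (w : Fin s → ℕ) (hw : ∀ j, w j ∈ V₂)
    (ε : Fin r → ℤ) (hε : ∀ i, |ε i| ≤ D) (η : Fin s → ℤ) (hη : ∀ j, |η j| ≤ D)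
    (hsum : ∑ i, ε i * a (v i) + ∑ j, η j * a (w j) = 0) :
    ∑ i, ε i * a (v i) = 0 ∧ ∑ j, η j * a (w j) = 0 := by
  have hMD : M * D ≤ 2 ^ k := by
    rw [hk]; exact_mod_cast Nat.le_two_pow_ceil_log_div_log_two (M * D)
  have hcard : #(univ : Finset (Fin r ⊕ Fin s)) * D ≤ 2 ^ k := by
    rw [card_univ, Fintype.card_sum, Fintype.card_fin, Fintype.card_fin]
    exact (Nat.mul_le_mul_right D hrs).trans hMD
  have hV₁ := sum_filter_eq_zero_of_separated hdvd hgap (n := Sum.elim v w) (c := Sum.elim ε η)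
    Sum.isLeft univ hcard (by rintro (i | j) -; exacts [hε i, hη j])
    (by
      rintro (i | i) - (j | j) - hne
      · exact absurd rfl hne
      · exact hsep _ (hv i) _ (hw j)
      · rw [abs_sub_comm]; exact hsep _ (hv j) _ (hw i)
      · exact absurd rfl hne)
    (by rwa [Fintype.sum_sum_type]) true
  simp only [sum_filter, Fintype.sum_sum_type, Sum.isLeft_inl, Sum.isLeft_inr, Sum.elim_inl,
    ↓reduceIte, Bool.false_eq_true, sum_const_zero, add_zero] at hV₁
  exact ⟨hV₁, by linarith⟩

/-- Splitting of solutions to the Diophantine equation for lacunary sequences with integer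
ratios: setting `k = ⌈log (M D) / log 2⌉`, if the index sets `V₁` and `V₂` are at distance
at least `k + 1` from each other, then every solution of
`∑ ε_i a_{v_i} + ∑ η_j a_{w_j} = 0` with at most `M` terms and coefficients bounded by `D`
splits into two solutions `∑ ε_i a_{v_i} = 0` and `∑ η_j a_{w_j} = 0`. -/
theorem stmt7 (D M : ℕ) (hD : 1 ≤ D) (hM : 1 ≤ M)
    (a : ℕ → ℕ) (hpos : ∀ n, 0 < a n)
    (hdvd : ∀ n, a n ∣ a (n + 1)) (hgap : ∀ n, 2 * a n ≤ a (n + 1))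
    (k : ℕ) (hk : k = ⌈Real.log (M * D) / Real.log 2⌉₊)
    (V₁ V₂ : Set ℕ) (h1 : V₁.Nonempty) (h2 : V₂.Nonempty) (hdisj : Disjoint V₁ V₂)
    (hsep : ∀ v ∈ V₁, ∀ w ∈ V₂, (k : ℤ) + 1 ≤ |(v : ℤ) - (w : ℤ)|)
    (r s : ℕ) (hr : 1 ≤ r) (hs : 1 ≤ s) (hrs : r + s ≤ M)
    (v : Fin r → ℕ) (hv : ∀ i, v i ∈ V₁) (w : Fin s → ℕ) (hw : ∀ j, w j ∈ V₂)
    (ε : Fin r → ℤ) (hε : ∀ i, |ε i| ≤ D) (η : Fin s → ℤ) (hη : ∀ j, |η j| ≤ D)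
    (hsum : ∑ i, ε i * a (v i) + ∑ j, η j * a (w j) = 0) :
    ∑ i, ε i * a (v i) = 0 ∧ ∑ j, η j * a (w j) = 0 :=
  stmt7_general D M a hdvd hgap k hk V₁ V₂ hsep r s hrs v hv w hw ε hε η hη hsum
end

section
/- Let f be a real, even, centered trigonometric polynomial of degree D, let (a_n) be a sequence of positive integers with a_{n+1}/a_n ∈ {2,3,…} for all n, and set X_n = f(a_n U) with U ~ Unif(0,1). Fix M ∈ ℕ and k = ⌈log(MD)/log 2⌉. Then the graph G on vertex set ℕ with i ∼ j iff |i - j| ≤ k is a correlation graph of range M for (X_n): whenever V_1, V_2 are disjoint nonempty subsets of ℕ with no edges between them, and r + s ≤ M with v_i ∈ V_1, w_j ∈ V_2, then E[Π_{i=1}^r X_{v_i} Π_{j=1}^s X_{w_j}] = E[Π_{i=1}^r X_{v_i}]·E[Π_{j=1}^s X_{w_j}]. -/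
/-!
Since `c` is even, `f (m x) = ∑_{|d| ≤ D} c_d e(d m x)` with `e(y) = exp (2πiy)`, so each of the
three means is a sum of products of coefficients over frequency vectors, counting only the vectors
whose frequency `∑ p_i a_{v_i}` (resp. `∑ q_j a_{w_j}`, `∑ p_i a_{v_i} + ∑ q_j a_{w_j}`) vanishes.
The moment therefore factorizes as soon as `∑ p_i a_{v_i} + ∑ q_j a_{w_j} = 0` forces
`∑ p_i a_{v_i} = 0`, where `∑ |p_i| + ∑ |q_j| ≤ M D ≤ 2^k`.

If no index lies in `(t, t + k]`, the part `∑_{n_i ≤ t} coef_i a_{n_i}` of a vanishing sum is at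
most `2^k a_t ≤ a_{t+k} < a_{t+k+1}` in absolute value, yet divisible by `a_{t+k+1}`, hence zero.
As `V₁` and `V₂` are more than `k` apart, the part over `V₁` is assembled from differences of
such partial sums, by induction on `t`.
-/

open Finset Real

namespace Lacunary

variable {a : ℕ → ℕ}

lemma dvd_of_le_of_forall_dvd_succ (hdvd : ∀ n, a n ∣ a (n + 1)) {m n : ℕ} (h : m ≤ n) :
    a m ∣ a n :=
  Nat.rel_of_forall_rel_succ_of_le (· ∣ ·) hdvd h

lemma monotone_of_forall_two_mul_le (hgap : ∀ n, 2 * a n ≤ a (n + 1)) : Monotone a :=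
  monotone_nat_of_le_succ fun n => (Nat.le_mul_of_pos_left _ two_pos).trans (hgap n)

lemma two_pow_mul_le_of_forall_two_mul_le (hgap : ∀ n, 2 * a n ≤ a (n + 1)) (t j : ℕ) :
    2 ^ j * a t ≤ a (t + j) := by
  induction j with
  | zero => simp
  | succ j ih =>
    rw [pow_succ', mul_assoc, ← add_assoc]
    exact (Nat.mul_le_mul_left 2 ih).trans (hgap _)

variable (a) {ι : Type*} (node : ι → ℕ) (coef : ι → ℤ)

def lowSum (S : Finset ι) (t : ℕ) : ℤ :=
  ∑ i ∈ S with node i ≤ t, coef i * a (node i)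

def IsGap (k t : ℕ) : Prop :=
  ∀ i, t < node i → t + k < node i

def Separated (k : ℕ) (S : Finset ι) : Prop :=
  ∀ i ∈ S, ∀ j ∉ S, (k : ℤ) < |(node i : ℤ) - node j|

variable {a node coef} {k : ℕ} {S : Finset ι}

lemma Separated.node_ne (hS : Separated node k S) {i j : ι} (hi : i ∈ S) (hj : j ∉ S) :
    node i ≠ node j := fun h => by
  have := hS i hi j hj
  rw [h, sub_self, abs_zero] at this
  omega

/-- The last node of `S` before a gap is itself followed by a gap, since the nodes of `Sᶜ` keep
their distance from it. -/
lemma Separated.exists_isGap_lowSum_eq (hS : Separated node k S) {t : ℕ} (ht : IsGap node k t)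
    (hne : ∃ i ∈ S, node i ≤ t) :
    ∃ i ∈ S, node i ≤ t ∧ IsGap node k (node i) ∧
      lowSum a node coef S t = lowSum a node coef S (node i) := by
  obtain ⟨i, hi, hmax⟩ := (S.filter (node · ≤ t)).exists_max_image node (by simpa [Finset.Nonempty])
  simp only [mem_filter] at hi hmax
  refine ⟨i, hi.1, hi.2, fun j hij => ?_, ?_⟩
  · by_cases hjt : node j ≤ t
    · have hj : j ∉ S := fun hj => by have := hmax j ⟨hj, hjt⟩; omega
      have := hS i hi.1 j hj
      rw [abs_sub_comm, abs_of_pos (by omega)] at this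
      omega
    · have := ht j (by omega); omega
  · refine sum_congr (filter_congr fun j hj => ?_) fun _ _ => rfl
    exact ⟨fun hjt => hmax j ⟨hj, hjt⟩, fun hji => hji.trans hi.2⟩

variable [Fintype ι]

lemma lowSum_univ_eq_zero_of_isGap (hpos : ∀ n, 0 < a n) (hdvd : ∀ n, a n ∣ a (n + 1))
    (hgap : ∀ n, 2 * a n ≤ a (n + 1)) {t : ℕ} (hcoef : ∑ i, |coef i| ≤ 2 ^ k)
    (hzero : ∑ i, coef i * (a (node i) : ℤ) = 0) (ht : IsGap node k t) :
    lowSum a node coef univ t = 0 := by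
  have hsplit : lowSum a node coef univ t + ∑ i with ¬node i ≤ t, coef i * (a (node i) : ℤ) = 0 :=
    (sum_filter_add_sum_filter_not _ _ _).trans hzero
  have hhigh : (a (t + k + 1) : ℤ) ∣ ∑ i with ¬node i ≤ t, coef i * (a (node i) : ℤ) :=
    dvd_sum fun i hi => dvd_mul_of_dvd_right (Int.natCast_dvd_natCast.mpr
      (dvd_of_le_of_forall_dvd_succ hdvd (ht i (by simpa using hi)))) _
  have hlow : |lowSum a node coef univ t| < a (t + k + 1) :=
    calc |lowSum a node coef univ t|
        ≤ ∑ i with node i ≤ t, |coef i| * (a (node i) : ℤ) := by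
          simpa only [lowSum, abs_mul, Nat.abs_cast] using
            abs_sum_le_sum_abs (fun i => coef i * (a (node i) : ℤ)) {i | node i ≤ t}
      _ ≤ ∑ i with node i ≤ t, |coef i| * (a t : ℤ) :=
          sum_le_sum fun i hi => mul_le_mul_of_nonneg_left
            (Int.ofNat_le.mpr (monotone_of_forall_two_mul_le hgap (mem_filter.mp hi).2))
            (abs_nonneg _)
      _ ≤ (∑ i, |coef i|) * a t := by
          rw [← sum_mul]
          exact mul_le_mul_of_nonneg_right (sum_le_sum_of_subset_of_nonneg (filter_subset _ _)
            fun i _ _ => abs_nonneg (coef i)) (Int.natCast_nonneg _)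
      _ ≤ 2 ^ k * a t := by gcongr
      _ ≤ a (t + k) := by exact_mod_cast two_pow_mul_le_of_forall_two_mul_le hgap t k
      _ < a (t + k + 1) := by
          have := hgap (t + k); have := hpos (t + k); omega
  exact Int.eq_zero_of_abs_lt_dvd (by rwa [eq_neg_of_add_eq_zero_left hsplit, dvd_neg]) hlow

section Compl

variable [DecidableEq ι]

lemma lowSum_add_lowSum_compl (S : Finset ι) (t : ℕ) :
    lowSum a node coef S t + lowSum a node coef Sᶜ t = lowSum a node coef univ t := by
  simp only [lowSum, sum_filter]
  exact sum_add_sum_compl S _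

lemma Separated.compl (hS : Separated node k S) : Separated node k Sᶜ := fun i hi j hj => by
  rw [abs_sub_comm]
  exact hS j (by simpa using hj) i (by simpa using hi)

lemma Separated.lowSum_eq_zero (hlow : ∀ t, IsGap node k t → lowSum a node coef univ t = 0)
    (t : ℕ) (ht : IsGap node k t) (hS : Separated node k S) : lowSum a node coef S t = 0 := by
  induction t using Nat.strong_induction_on generalizing S with
  | _ t ih =>
  have hcompl := (lowSum_add_lowSum_compl S t).trans (hlow t ht)
  by_cases hP : ∃ i ∈ S, node i ≤ t
  swap
  · simp only [not_exists, not_and, not_le] at hP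
    exact sum_eq_zero fun i hi => absurd (mem_filter.mp hi).2 (hP i (mem_filter.mp hi).1).not_ge
  by_cases hQ : ∃ j ∈ Sᶜ, node j ≤ t
  swap
  · simp only [not_exists, not_and, not_le] at hQ
    have : lowSum a node coef Sᶜ t = 0 :=
      sum_eq_zero fun i hi => absurd (mem_filter.mp hi).2 (hQ i (mem_filter.mp hi).1).not_ge
    linarith
  obtain ⟨p, hp, hpt, hpgap, hpeq⟩ := hS.exists_isGap_lowSum_eq (coef := coef) ht hP
  obtain ⟨q, hq, hqt, hqgap, hqeq⟩ := hS.compl.exists_isGap_lowSum_eq (coef := coef) ht hQ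
  -- whichever side has the earlier last node below `t` adds nothing after that earlier gap
  rcases (hS.node_ne hp (by simpa using hq)).lt_or_gt with hpq | hqp
  · rw [hpeq]
    exact ih _ (by omega) hpgap hS
  · have := ih _ (by omega) hqgap hS.compl
    linarith

lemma Separated.sum_eq_zero (hpos : ∀ n, 0 < a n) (hdvd : ∀ n, a n ∣ a (n + 1))
    (hgap : ∀ n, 2 * a n ≤ a (n + 1)) (hcoef : ∑ i, |coef i| ≤ 2 ^ k)
    (hzero : ∑ i, coef i * (a (node i) : ℤ) = 0) (hS : Separated node k S) :
    ∑ i ∈ S, coef i * (a (node i) : ℤ) = 0 := by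
  have hlast : IsGap node k (univ.sup node) := fun i hi => absurd (le_sup (mem_univ i)) hi.not_ge
  rw [← hS.lowSum_eq_zero (coef := coef)
    (fun t => lowSum_univ_eq_zero_of_isGap hpos hdvd hgap hcoef hzero) _ hlast]
  exact (sum_filter_of_ne fun i _ _ => le_sup (mem_univ i)).symm

end Compl

lemma sum_eq_zero_of_add_eq_zero_of_separated (hpos : ∀ n, 0 < a n)
    (hdvd : ∀ n, a n ∣ a (n + 1)) (hgap : ∀ n, 2 * a n ≤ a (n + 1))
    {κ : Type*} [Fintype κ] {u : ι → ℕ} {w : κ → ℕ}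
    (hsep : ∀ i j, (k : ℤ) < |(u i : ℤ) - w j|) {p : ι → ℤ} {q : κ → ℤ}
    (hcoef : ∑ i, |p i| + ∑ j, |q j| ≤ 2 ^ k)
    (h : ∑ i, p i * (a (u i) : ℤ) + ∑ j, q j * (a (w j) : ℤ) = 0) :
    ∑ i, p i * (a (u i) : ℤ) = 0 := by
  classical
  have hS : Separated (Sum.elim u w) k (univ.map .inl) := by
    rintro (i | i) hi (j | j) hj <;> simp_all
  simpa using hS.sum_eq_zero (coef := Sum.elim p q) hpos hdvd hgap
    (by simpa [Fintype.sum_sum_type] using hcoef) (by simpa [Fintype.sum_sum_type] using h)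

end Lacunary

noncomputable def fourierExp (n : ℤ) (x : ℝ) : ℂ :=
  Complex.exp (2 * π * Complex.I * n * x)

lemma fourierExp_add (m n : ℤ) (x : ℝ) :
    fourierExp (m + n) x = fourierExp m x * fourierExp n x := by
  simp only [fourierExp, ← Complex.exp_add]
  push_cast
  ring_nf

lemma fourierExp_sum {ι : Type*} (s : Finset ι) (n : ι → ℤ) (x : ℝ) :
    fourierExp (∑ i ∈ s, n i) x = ∏ i ∈ s, fourierExp (n i) x := by
  simp only [fourierExp, ← Complex.exp_sum]
  push_cast
  rw [mul_sum, sum_mul]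

lemma fourierExp_mul_apply (n : ℤ) (m : ℕ) (x : ℝ) :
    fourierExp n (m * x) = fourierExp (n * m) x := by
  simp only [fourierExp]
  push_cast
  ring_nf

lemma ofReal_cos_eq_fourierExp (n : ℤ) (x : ℝ) :
    (cos (2 * π * n * x) : ℂ) = (fourierExp n x + fourierExp (-n) x) / 2 := by
  simp only [fourierExp, Complex.ofReal_cos, Complex.cos]
  push_cast
  ring_nf

lemma continuous_fourierExp (n : ℤ) : Continuous (fourierExp n) := by
  unfold fourierExp
  fun_prop

lemma integral_fourierExp (n : ℤ) : ∫ x in (0 : ℝ)..1, fourierExp n x = if n = 0 then 1 else 0 := by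
  split_ifs with hn
  · simp [fourierExp, hn]
  have hc : 2 * π * Complex.I * n ≠ 0 := by simp [hn, pi_ne_zero]
  have hperiod : Complex.exp (2 * π * Complex.I * n * (1 : ℝ)) = 1 := by
    rw [← Complex.exp_int_mul_two_pi_mul_I n]
    push_cast
    ring_nf
  simp only [fourierExp]
  rw [integral_exp_mul_complex hc, hperiod]
  simp

lemma integral_sum_fourierExp {κ : Type*} (s : Finset κ) (α : κ → ℂ) (A : κ → ℤ) :
    ∫ x in (0 : ℝ)..1, ∑ p ∈ s, α p * fourierExp (A p) x
      = ∑ p ∈ s, α p * if A p = 0 then 1 else 0 := by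
  rw [intervalIntegral.integral_finsetSum (f := fun p x => α p * fourierExp (A p) x) fun p _ =>
    (continuous_const.mul (continuous_fourierExp (A p))).intervalIntegrable _ _]
  simp only [intervalIntegral.integral_const_mul, integral_fourierExp]

lemma integral_mul_eq_mul_integral_of_add_eq_zero {κ₁ κ₂ : Type*} (s₁ : Finset κ₁)
    (s₂ : Finset κ₂) (α : κ₁ → ℂ) (β : κ₂ → ℂ) (A : κ₁ → ℤ) (B : κ₂ → ℤ)
    (hAB : ∀ p ∈ s₁, ∀ q ∈ s₂, A p + B q = 0 → A p = 0) :
    ∫ x in (0 : ℝ)..1, (∑ p ∈ s₁, α p * fourierExp (A p) x) * ∑ q ∈ s₂, β q * fourierExp (B q) x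
      = (∫ x in (0 : ℝ)..1, ∑ p ∈ s₁, α p * fourierExp (A p) x)
        * ∫ x in (0 : ℝ)..1, ∑ q ∈ s₂, β q * fourierExp (B q) x := by
  have hprod : ∀ x, (∑ p ∈ s₁, α p * fourierExp (A p) x) * ∑ q ∈ s₂, β q * fourierExp (B q) x
      = ∑ pq ∈ s₁ ×ˢ s₂, α pq.1 * β pq.2 * fourierExp (A pq.1 + B pq.2) x := fun x => by
    rw [Finset.sum_mul_sum, ← sum_product']
    exact sum_congr rfl fun _ _ => by rw [fourierExp_add]; ring
  simp_rw [hprod, integral_sum_fourierExp, Finset.sum_mul_sum, ← sum_product']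
  refine sum_congr rfl fun pq hpq => ?_
  obtain ⟨hp, hq⟩ := mem_product.mp hpq
  have hiff : A pq.1 + B pq.2 = 0 ↔ A pq.1 = 0 ∧ B pq.2 = 0 :=
    ⟨fun h => ⟨hAB _ hp _ hq h, by linarith [hAB _ hp _ hq h]⟩, fun h => by rw [h.1, h.2, add_zero]⟩
  by_cases hA : A pq.1 = 0 <;> by_cases hB : B pq.2 = 0 <;> simp [hiff, hA, hB]

lemma prod_sum_fourierExp {ι : Type*} [Fintype ι] [DecidableEq ι] (s : Finset ℤ) (b : ℤ → ℂ)
    (m : ι → ℤ) (x : ℝ) :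
    ∏ i, ∑ d ∈ s, b d * fourierExp (d * m i) x
      = ∑ p ∈ Fintype.piFinset fun _ => s, (∏ i, b (p i)) * fourierExp (∑ i, p i * m i) x := by
  rw [prod_univ_sum]
  simp only [prod_mul_distrib, fourierExp_sum]

lemma sum_mul_cos_eq_sum_mul_fourierExp {s : Finset ℤ} (hs : ∀ d ∈ s, -d ∈ s) {c : ℤ → ℝ}
    (hc : ∀ d, c (-d) = c d) (x : ℝ) :
    ((∑ d ∈ s, c d * cos (2 * π * d * x) : ℝ) : ℂ) = ∑ d ∈ s, c d * fourierExp d x := by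
  have hneg : ∑ d ∈ s, (c d : ℂ) * fourierExp (-d) x = ∑ d ∈ s, c d * fourierExp d x :=
    sum_nbij' (- ·) (- ·) hs hs (fun _ _ => neg_neg _) (fun _ _ => neg_neg _)
      fun d _ => by simp [hc]
  rw [Complex.ofReal_sum]
  simp_rw [Complex.ofReal_mul, ofReal_cos_eq_fourierExp, mul_div, mul_add, ← sum_div,
    sum_add_distrib, hneg]
  ring

lemma ofReal_prod_eq_sum_fourierExp {s : Finset ℤ} (hs : ∀ d ∈ s, -d ∈ s) {c : ℤ → ℝ}
    (hc : ∀ d, c (-d) = c d) {f : ℝ → ℝ} (hf : ∀ x, f x = ∑ d ∈ s, c d * cos (2 * π * d * x))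
    {ι : Type*} [Fintype ι] [DecidableEq ι] (m : ι → ℕ) (x : ℝ) :
    ((∏ i, f (m i * x) : ℝ) : ℂ)
      = ∑ p ∈ Fintype.piFinset fun _ => s, (∏ i, (c (p i) : ℂ)) * fourierExp (∑ i, p i * m i) x :=
  calc ((∏ i, f (m i * x) : ℝ) : ℂ)
      = ∏ i, ∑ d ∈ s, (c d : ℂ) * fourierExp (d * m i) x := by
        rw [Complex.ofReal_prod]
        refine prod_congr rfl fun i _ => ?_
        rw [hf, sum_mul_cos_eq_sum_mul_fourierExp hs hc]
        simp_rw [fourierExp_mul_apply]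
    _ = _ := prod_sum_fourierExp _ _ _ x

lemma le_two_pow_ceil_log_div_log_two {x : ℝ} (hx : 0 ≤ x) : x ≤ 2 ^ ⌈log x / log 2⌉₊ := by
  rcases hx.eq_or_lt with rfl | hx
  · positivity
  rw [← rpow_natCast, ← logb_le_iff_le_rpow one_lt_two hx, ← log_div_log]
  exact Nat.le_ceil _

lemma sum_abs_le_of_mem_piFinset_Icc {ι : Type*} [Fintype ι] [DecidableEq ι] {D : ℕ}
    {p : ι → ℤ} (hp : p ∈ Fintype.piFinset fun _ => Icc (-(D : ℤ)) D) :
    ∑ i, |p i| ≤ Fintype.card ι * D := by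
  calc ∑ i, |p i| ≤ ∑ _i : ι, (D : ℤ) :=
        sum_le_sum fun i _ => abs_le.mpr (mem_Icc.mp (Fintype.mem_piFinset.mp hp i))
    _ = Fintype.card ι * D := by simp

open Real in
theorem stmt8_general (D M : ℕ)
    (c : ℤ → ℝ) (hsym : ∀ d, c (-d) = c d)
    (f : ℝ → ℝ)
    (hf : ∀ x, f x = ∑ d ∈ Finset.Icc (-(D:ℤ)) D, c d * Real.cos (2 * π * d * x))
    (a : ℕ → ℕ) (hpos : ∀ n, 0 < a n)
    (hdvd : ∀ n, a n ∣ a (n + 1)) (hgap : ∀ n, 2 * a n ≤ a (n + 1))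
    (k : ℕ) (hk : k = ⌈Real.log (M * D) / Real.log 2⌉₊)
    (V₁ V₂ : Set ℕ)
    (hsep : ∀ v ∈ V₁, ∀ w ∈ V₂, (k : ℤ) + 1 ≤ |(v : ℤ) - (w : ℤ)|)
    (r s : ℕ) (hrs : r + s ≤ M)
    (v : Fin r → ℕ) (hv : ∀ i, v i ∈ V₁) (w : Fin s → ℕ) (hw : ∀ j, w j ∈ V₂) :
    ∫ x in (0:ℝ)..1, (∏ i, f (a (v i) * x)) * (∏ j, f (a (w j) * x))
      = (∫ x in (0:ℝ)..1, ∏ i, f (a (v i) * x)) * (∫ x in (0:ℝ)..1, ∏ j, f (a (w j) * x)) := by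
  have hMD : (M : ℤ) * D ≤ 2 ^ k := by
    exact_mod_cast hk ▸ le_two_pow_ceil_log_div_log_two (x := M * D) (by positivity)
  have hIcc : ∀ d ∈ Icc (-(D : ℤ)) D, -d ∈ Icc (-(D : ℤ)) D := fun d hd => by
    rw [mem_Icc] at hd ⊢
    omega
  apply Complex.ofReal_injective
  simp only [Complex.ofReal_mul, ← intervalIntegral.integral_ofReal,
    ofReal_prod_eq_sum_fourierExp hIcc hsym hf (fun i => a (v i)),
    ofReal_prod_eq_sum_fourierExp hIcc hsym hf (fun j => a (w j))]
  refine integral_mul_eq_mul_integral_of_add_eq_zero _ _ _ _ _ _ fun p hp q hq h => ?_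
  refine Lacunary.sum_eq_zero_of_add_eq_zero_of_separated hpos hdvd hgap
    (fun i j => Int.lt_iff_add_one_le.mpr (hsep _ (hv i) _ (hw j))) ?_ h
  calc ∑ i, |p i| + ∑ j, |q j| ≤ r * D + s * D := by
        simpa using
          add_le_add (sum_abs_le_of_mem_piFinset_Icc hp) (sum_abs_le_of_mem_piFinset_Icc hq)
    _ = (r + s) * D := by ring
    _ ≤ M * D := by gcongr; exact_mod_cast hrs
    _ ≤ 2 ^ k := hMD

open Real in
/-- The graph on `ℕ` with `i ∼ j` iff `|i - j| ≤ k`, `k = ⌈log (M D) / log 2⌉`, is a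
correlation graph of range `M` for `X_n = f (a_n U)`: mixed moments of variables indexed by
two subsets with no edges between them factorize, as long as at most `M` factors appear. -/
theorem stmt8 (D M : ℕ) (hD : 1 ≤ D) (hM : 1 ≤ M)
    (c : ℤ → ℝ) (hsym : ∀ d, c (-d) = c d) (h0 : c 0 = 0)
    (f : ℝ → ℝ)
    (hf : ∀ x, f x = ∑ d ∈ Finset.Icc (-(D:ℤ)) D, c d * Real.cos (2 * π * d * x))
    (a : ℕ → ℕ) (hpos : ∀ n, 0 < a n)
    (hdvd : ∀ n, a n ∣ a (n + 1)) (hgap : ∀ n, 2 * a n ≤ a (n + 1))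
    (k : ℕ) (hk : k = ⌈Real.log (M * D) / Real.log 2⌉₊)
    (V₁ V₂ : Set ℕ) (h1 : V₁.Nonempty) (h2 : V₂.Nonempty) (hdisj : Disjoint V₁ V₂)
    (hsep : ∀ v ∈ V₁, ∀ w ∈ V₂, (k : ℤ) + 1 ≤ |(v : ℤ) - (w : ℤ)|)
    (r s : ℕ) (hr : 1 ≤ r) (hs : 1 ≤ s) (hrs : r + s ≤ M)
    (v : Fin r → ℕ) (hv : ∀ i, v i ∈ V₁) (w : Fin s → ℕ) (hw : ∀ j, w j ∈ V₂) :
    ∫ x in (0:ℝ)..1, (∏ i, f (a (v i) * x)) * (∏ j, f (a (w j) * x))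
      = (∫ x in (0:ℝ)..1, ∏ i, f (a (v i) * x)) * (∫ x in (0:ℝ)..1, ∏ j, f (a (w j) * x)) :=
  stmt8_general D M c hsym f hf a hpos hdvd hgap k hk V₁ V₂ hsep r s hrs v hv w hw
end

section
/- Let (a_n) be a sequence of positive integers satisfying ρ ≥ 3 and a_{n+1}/(n^{1-1/ρ} a_n) → ∞ as n → ∞. Then Σ_{k=⌈n^{1/2ρ}⌉}^n a_k/a_{k+1} = o(n^{1/ρ}) as n → ∞. -/
/-!
Writing `α = 1/ρ`, the hypothesis says exactly that `a k / a (k+1) = o(k^(α-1))`. Since the lower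
end of the summation range tends to infinity, every summand is eventually at most `ε k^(α-1)`,
and `∑_{k=1}^n k^(α-1) ≤ n^α / α` (Bernoulli's inequality, telescoped), so the sum is `o(n^α)`.
-/

open Filter Asymptotics Real

lemma rpow_add_mul_rpow_sub_one_le {α : ℝ} (hα0 : 0 ≤ α) (hα1 : α ≤ 1) {x : ℝ} (hx : 0 ≤ x) :
    x ^ α + α * (x + 1) ^ (α - 1) ≤ (x + 1) ^ α := by
  set y := x + 1
  have hy : 0 < y := by positivity
  have hs : -1 ≤ -1 / y := by rw [neg_div, neg_le_neg_iff, div_le_one hy]; linarith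
  have hbernoulli : (1 + -1 / y) ^ α ≤ 1 + α * (-1 / y) :=
    rpow_one_add_le_one_add_mul_self hs hα0 hα1
  have hx_eq : x = y * (1 + -1 / y) := by field_simp; ring
  have hy_rpow : y ^ (α - 1) = y ^ α / y := by rw [rpow_sub hy, rpow_one]
  calc x ^ α + α * y ^ (α - 1)
      = y ^ α * (1 + -1 / y) ^ α + α * y ^ (α - 1) := by
        rw [hx_eq, mul_rpow hy.le (by linarith)]
    _ ≤ y ^ α * (1 + α * (-1 / y)) + α * y ^ (α - 1) := by gcongr
    _ = y ^ α := by rw [hy_rpow]; field_simp; ring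

lemma sum_Icc_one_rpow_sub_one_le {α : ℝ} (hα0 : 0 < α) (hα1 : α ≤ 1) (n : ℕ) :
    ∑ k ∈ Finset.Icc 1 n, (k : ℝ) ^ (α - 1) ≤ (n : ℝ) ^ α / α := by
  induction n with
  | zero => simp [zero_rpow hα0.ne']
  | succ n ih =>
    rw [Finset.sum_Icc_succ_top (by omega), le_div_iff₀ hα0]
    rw [le_div_iff₀ hα0] at ih
    have := rpow_add_mul_rpow_sub_one_le hα0.le hα1 n.cast_nonneg
    push_cast
    linarith

lemma isLittleO_sum_Icc_of_isLittleO_rpow {α : ℝ} (hα0 : 0 < α) (hα1 : α ≤ 1) {u : ℕ → ℝ}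
    (hu : u =o[atTop] fun k : ℕ => (k : ℝ) ^ (α - 1)) {m : ℕ → ℕ} (hm : Tendsto m atTop atTop) :
    (fun n : ℕ => ∑ k ∈ Finset.Icc (m n) n, u k) =o[atTop] fun n : ℕ => (n : ℝ) ^ α := by
  refine isLittleO_iff.2 fun c hc => ?_
  obtain ⟨N, hN⟩ := (isLittleO_iff.1 hu (mul_pos hc hα0)).exists_forall_of_atTop
  filter_upwards [hm.eventually_ge_atTop (max N 1)] with n hn
  rw [norm_of_nonneg (by positivity : (0 : ℝ) ≤ (n : ℝ) ^ α)]
  calc ‖∑ k ∈ Finset.Icc (m n) n, u k‖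
      ≤ ∑ k ∈ Finset.Icc (m n) n, c * α * (k : ℝ) ^ (α - 1) := by
        refine (norm_sum_le _ _).trans (Finset.sum_le_sum fun k hk => ?_)
        have hk := (Finset.mem_Icc.1 hk).1
        simpa [norm_of_nonneg (by positivity : (0 : ℝ) ≤ (k : ℝ) ^ (α - 1))] using
          hN k (by omega)
    _ ≤ ∑ k ∈ Finset.Icc 1 n, c * α * (k : ℝ) ^ (α - 1) :=
        Finset.sum_le_sum_of_subset_of_nonneg (Finset.Icc_subset_Icc_left (by omega))
          fun _ _ _ => by positivity
    _ ≤ c * α * ((n : ℝ) ^ α / α) := by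
        rw [← Finset.mul_sum]; gcongr; exact sum_Icc_one_rpow_sub_one_le hα0 hα1 n
    _ = c * (n : ℝ) ^ α := by field_simp

lemma isLittleO_div_succ_of_tendsto_div_rpow_mul {a : ℕ → ℝ} {α : ℝ}
    (h : Tendsto (fun n : ℕ => a (n + 1) / ((n : ℝ) ^ (1 - α) * a n)) atTop atTop) :
    (fun n : ℕ => a n / a (n + 1)) =o[atTop] fun n : ℕ => (n : ℝ) ^ (α - 1) := by
  have hratio : (fun n : ℕ => (a (n + 1) / ((n : ℝ) ^ (1 - α) * a n))⁻¹) =o[atTop]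
      fun _ => (1 : ℝ) :=
    (isLittleO_one_iff ℝ).2 h.inv_tendsto_atTop
  refine (hratio.mul_isBigO (isBigO_refl (fun n : ℕ => (n : ℝ) ^ (α - 1)) atTop)).congr' ?_
    (by simp)
  -- The identity needs no positivity of `a`: `(x / y)⁻¹ = y / x` holds also when `x` or `y` is `0`.
  filter_upwards [eventually_gt_atTop 0] with n hn
  have hcancel : (n : ℝ) ^ (1 - α) * (n : ℝ) ^ (α - 1) = 1 := by
    rw [← rpow_add (by positivity), show 1 - α + (α - 1) = 0 by ring, rpow_zero]
  rw [inv_div, div_mul_eq_mul_div, mul_right_comm, hcancel, one_mul]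

theorem stmt12_general (a : ℕ → ℕ) (ρ : ℕ) (hρ : 3 ≤ ρ)
    (hgap : Tendsto (fun n : ℕ => (a (n + 1) : ℝ) / ((n : ℝ) ^ ((1 : ℝ) - 1 / ρ) * a n))
      atTop atTop) :
    (fun n : ℕ => ∑ k ∈ Finset.Icc ⌈(n : ℝ) ^ ((1 : ℝ) / (2 * ρ))⌉₊ n, (a k : ℝ) / a (k + 1))
      =o[atTop] (fun n : ℕ => (n : ℝ) ^ ((1 : ℝ) / ρ)) := by
  have hρ0 : (0 : ℝ) < ρ := by positivity
  have hα1 : (1 : ℝ) / ρ ≤ 1 := by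
    rw [div_le_one hρ0]; exact_mod_cast (by omega : 1 ≤ ρ)
  have hstart : Tendsto (fun n : ℕ => ⌈(n : ℝ) ^ ((1 : ℝ) / (2 * ρ))⌉₊) atTop atTop :=
    tendsto_nat_ceil_atTop.comp
      ((tendsto_rpow_atTop (by positivity)).comp tendsto_natCast_atTop_atTop)
  exact isLittleO_sum_Icc_of_isLittleO_rpow (by positivity) hα1
    (isLittleO_div_succ_of_tendsto_div_rpow_mul hgap) hstart

open Filter in
/-- If `ρ ≥ 3` and `a (n+1) / (n^(1 - 1/ρ) a n) → ∞`, then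
`∑_{k = ⌈n^(1/(2ρ))⌉}^n a k / a (k+1) = o(n^(1/ρ))`. -/
theorem stmt12 (a : ℕ → ℕ) (hpos : ∀ n, 0 < a n) (ρ : ℕ) (hρ : 3 ≤ ρ)
    (hgap : Tendsto (fun n : ℕ => (a (n + 1) : ℝ) / ((n : ℝ) ^ ((1 : ℝ) - 1 / ρ) * a n))
      atTop atTop) :
    (fun n : ℕ => ∑ k ∈ Finset.Icc ⌈(n : ℝ) ^ ((1 : ℝ) / (2 * ρ))⌉₊ n, (a k : ℝ) / a (k + 1))
      =o[atTop] (fun n : ℕ => (n : ℝ) ^ ((1 : ℝ) / ρ)) :=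
  stmt12_general a ρ hρ hgap
end

section
/- Let (a_n) be a lacunary sequence satisfying the large gap condition a_{n+1}/a_n → ∞, let f be a real, even, centered trigonometric polynomial of degree D (not identically zero), U ~ Unif(0,1), X_j = f(a_j U), and S_n = Σ_{j=1}^n X_j. Then E[S_n^2] = n·E[X_1^2] + O(1) as n → ∞. -/
/-!
For `p > 0` the dilate `x ↦ f (p x)` is a cosine polynomial with frequencies `d p`,
`0 < |d| ≤ D` (as `c 0 = 0`). Hence `f (p ·)` and `f (q ·)` are orthogonal in `L²(0,1)` as soon
as `D p < q`, while `∫₀¹ f (p x)² dx = ∫₀¹ f²` by periodicity. The large gap condition gives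
`D a_j < a_{n+1}` for all `j ≤ n` once `n` is large, and then
`E[S_{n+1}²] - E[S_n²] = E[X_{n+1}²] = E[X_1²]`: the sequence `E[S_n²] - n E[X_1²]` is
eventually constant.
-/

open Real Filter Finset

theorem integral_cos_two_pi_int_mul_eq_zero {m : ℤ} (hm : m ≠ 0) :
    ∫ x in (0:ℝ)..1, cos (2 * π * m * x) = 0 := by
  have hc : (2 * π * m : ℝ) ≠ 0 := by positivity
  rw [intervalIntegral.integral_comp_mul_left (fun x => cos x) hc, integral_cos, mul_zero, mul_one,
    sin_zero, sub_zero, show 2 * π * (m : ℝ) = (2 * m : ℤ) * π by push_cast; ring, sin_int_mul_pi,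
    smul_zero]

theorem integral_cos_mul_cos_eq_zero {m n : ℤ} (hmn : |m| ≠ |n|) :
    ∫ x in (0:ℝ)..1, cos (2 * π * m * x) * cos (2 * π * n * x) = 0 := by
  have hsub : m - n ≠ 0 := fun h => hmn (by rw [sub_eq_zero.1 h])
  have hadd : m + n ≠ 0 := fun h => hmn (by rw [eq_neg_of_add_eq_zero_left h, abs_neg])
  have hprod : ∀ x : ℝ, cos (2 * π * m * x) * cos (2 * π * n * x)
      = (cos (2 * π * (m - n : ℤ) * x) + cos (2 * π * (m + n : ℤ) * x)) / 2 := fun x => by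
    push_cast
    rw [show 2 * π * (m - n) * x = 2 * π * m * x - 2 * π * n * x by ring,
      show 2 * π * (m + n) * x = 2 * π * m * x + 2 * π * n * x by ring, cos_sub, cos_add]
    ring
  simp_rw [hprod]
  rw [intervalIntegral.integral_div,
    intervalIntegral.integral_add (Continuous.intervalIntegrable (by fun_prop) _ _)
      (Continuous.intervalIntegrable (by fun_prop) _ _),
    integral_cos_two_pi_int_mul_eq_zero hsub, integral_cos_two_pi_int_mul_eq_zero hadd]
  norm_num

theorem Function.Periodic.intervalIntegral_comp_int_mul {E : Type*} [NormedAddCommGroup E]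
    [NormedSpace ℝ E] {g : ℝ → E} (hg : Function.Periodic g 1)
    (hint : ∀ t₁ t₂, IntervalIntegrable g MeasureTheory.volume t₁ t₂) {p : ℤ} (hp : p ≠ 0) :
    ∫ x in (0:ℝ)..1, g (p * x) = ∫ x in (0:ℝ)..1, g x := by
  have hp' : (p : ℝ) ≠ 0 := by exact_mod_cast hp
  have := hg.intervalIntegral_add_zsmul_eq p 0 hint
  rw [intervalIntegral.integral_comp_mul_left g hp', mul_zero, mul_one]
  simp only [zero_add, zsmul_eq_mul, mul_one] at this
  rw [this, ← Int.cast_smul_eq_zsmul ℝ, smul_smul, inv_mul_cancel₀ hp', one_smul]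

theorem eventually_forall_mul_lt_of_tendsto_div_atTop {u : ℕ → ℝ} (hu : ∀ n, 0 < u n)
    (h : Tendsto (fun n => u (n + 1) / u n) atTop atTop) (C : ℝ) :
    ∀ᶠ n in atTop, ∀ j ≤ n, C * u j < u (n + 1) := by
  obtain ⟨K, hCK, hK⟩ : ∃ K, C < K ∧ 1 < K :=
    ⟨max C 1 + 1, by linarith [le_max_left C 1], by linarith [le_max_right C 1]⟩
  obtain ⟨N, hN⟩ := eventually_atTop.1 (h.eventually_ge_atTop K)
  have hstep : ∀ n ≥ N, K * u n ≤ u (n + 1) := fun n hn => (le_div_iff₀ (hu n)).1 (hN n hn)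
  have hmono : MonotoneOn u (Set.Ici N) := monotoneOn_nat_Ici_of_le_succ fun n hn =>
    le_trans (le_mul_of_one_le_left (hu n).le hK.le) (hstep n hn)
  have htend : Tendsto u atTop atTop := by
    rw [← tendsto_add_atTop_iff_nat N]
    exact tendsto_atTop_of_geom_le (hu _) hK fun n => by
      simpa [add_right_comm] using hstep (n + N) (by omega)
  have hsmall : ∀ᶠ n in atTop, ∀ j ∈ range N, C * u j < u (n + 1) :=
    (eventually_all_finset _).2 fun j _ =>
      tendsto_add_atTop_iff_nat 1 |>.2 htend |>.eventually_gt_atTop _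
  filter_upwards [hsmall, eventually_ge_atTop N] with n hsmall hn j hj
  rcases lt_or_ge j N with hjN | hjN
  · exact hsmall j (mem_range.2 hjN)
  · calc C * u j < K * u j := mul_lt_mul_of_pos_right hCK (hu j)
      _ ≤ K * u n := mul_le_mul_of_nonneg_left (hmono hjN hn hj) (by linarith)
      _ ≤ u (n + 1) := hstep n hn

noncomputable def cosPoly (D : ℕ) (c : ℤ → ℝ) (x : ℝ) : ℝ :=
  ∑ d ∈ Icc (-(D:ℤ)) D, c d * cos (2 * π * d * x)

section cosPoly

variable (D : ℕ) (c : ℤ → ℝ)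

@[fun_prop]
theorem continuous_cosPoly : Continuous (cosPoly D c) := by
  unfold cosPoly; fun_prop

theorem cosPoly_periodic : Function.Periodic (cosPoly D c) 1 := fun x => by
  refine sum_congr rfl fun d _ => ?_
  rw [show 2 * π * d * (x + 1) = 2 * π * d * x + d * (2 * π) by ring, cos_add_int_mul_two_pi]

theorem integral_cosPoly_comp_mul_sq {p : ℕ} (hp : 0 < p) :
    ∫ x in (0:ℝ)..1, cosPoly D c (p * x) ^ 2 = ∫ x in (0:ℝ)..1, cosPoly D c x ^ 2 := by
  have hg : Function.Periodic (fun x => cosPoly D c x ^ 2) 1 :=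
    (cosPoly_periodic D c).comp fun y => y ^ 2
  exact_mod_cast hg.intervalIntegral_comp_int_mul
    (fun _ _ => Continuous.intervalIntegrable (by fun_prop) _ _) (p := p) (by omega)

theorem integral_cosPoly_comp_mul_mul_eq_zero (h0 : c 0 = 0) {p q : ℕ} (hp : 0 < p)
    (hpq : D * p < q) :
    ∫ x in (0:ℝ)..1, cosPoly D c (p * x) * cosPoly D c (q * x) = 0 := by
  have hexpand : ∀ x : ℝ, cosPoly D c (p * x) * cosPoly D c (q * x) =
      ∑ d ∈ Icc (-(D:ℤ)) D, ∑ e ∈ Icc (-(D:ℤ)) D,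
        c d * c e * (cos (2 * π * (d * p : ℤ) * x) * cos (2 * π * (e * q : ℤ) * x)) := by
    intro x
    simp only [cosPoly, sum_mul_sum]
    refine sum_congr rfl fun d _ => sum_congr rfl fun e _ => ?_
    push_cast
    ring_nf
  simp_rw [hexpand]
  rw [intervalIntegral.integral_finsetSum fun _ _ =>
    Continuous.intervalIntegrable (by fun_prop) _ _]
  refine sum_eq_zero fun d hd => ?_
  rw [intervalIntegral.integral_finsetSum fun _ _ =>
    Continuous.intervalIntegrable (by fun_prop) _ _]
  refine sum_eq_zero fun e _ => ?_
  rw [intervalIntegral.integral_const_mul]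
  rcases eq_or_ne d 0 with rfl | hd0
  · simp [h0]
  rcases eq_or_ne e 0 with rfl | he0
  · simp [h0]
  suffices |d * p| < |e * q| by rw [integral_cos_mul_cos_eq_zero this.ne, mul_zero]
  have hdD : |d| ≤ D := abs_le.2 (mem_Icc.1 hd)
  have he1 : 1 ≤ |e| := Int.one_le_abs he0
  rw [abs_mul, abs_mul, Nat.abs_cast, Nat.abs_cast]
  calc |d| * p ≤ D * p := by gcongr
    _ < q := by exact_mod_cast hpq
    _ ≤ |e| * q := le_mul_of_one_le_left (by positivity) he1

end cosPoly

theorem integral_sum_Icc_succ_sq {X : ℕ → ℝ → ℝ} (hX : ∀ j, Continuous (X j)) (a b : ℝ) (n : ℕ) :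
    ∫ x in a..b, (∑ j ∈ Icc 1 (n + 1), X j x) ^ 2 = (∫ x in a..b, (∑ j ∈ Icc 1 n, X j x) ^ 2)
      + 2 * ∑ j ∈ Icc 1 n, (∫ x in a..b, X j x * X (n + 1) x) + ∫ x in a..b, X (n + 1) x ^ 2 := by
  have hsq : ∀ x, (∑ j ∈ Icc 1 (n + 1), X j x) ^ 2 = (∑ j ∈ Icc 1 n, X j x) ^ 2
      + 2 * ∑ j ∈ Icc 1 n, X j x * X (n + 1) x + X (n + 1) x ^ 2 := fun x => by
    rw [sum_Icc_succ_top (by omega), ← sum_mul]; ring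
  have hint : ∀ {g : ℝ → ℝ}, Continuous g → IntervalIntegrable g MeasureTheory.volume a b :=
    fun hg => hg.intervalIntegrable _ _
  simp_rw [hsq]
  rw [intervalIntegral.integral_add (hint (by fun_prop)) (hint (by fun_prop)),
    intervalIntegral.integral_add (hint (by fun_prop)) (hint (by fun_prop)),
    intervalIntegral.integral_const_mul,
    intervalIntegral.integral_finsetSum fun j _ => hint (by fun_prop)]

theorem Filter.EventuallyConst.isBigO_one {α E : Type*} [NormedAddCommGroup E] {l : Filter α}
    {f : α → E} (h : EventuallyConst f l) : f =O[l] fun _ => (1 : ℝ) := by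
  obtain ⟨y, hy⟩ := eventuallyConst_iff_exists_eventuallyEq.1 h
  exact (Asymptotics.isBigO_const_const y one_ne_zero l).congr' hy.symm EventuallyEq.rfl

open Real Filter in
theorem stmt13_general (D : ℕ) (c : ℤ → ℝ) (h0 : c 0 = 0)
    (f : ℝ → ℝ)
    (hf : ∀ x, f x = ∑ d ∈ Finset.Icc (-(D:ℤ)) D, c d * Real.cos (2 * π * d * x))
    (a : ℕ → ℕ) (hpos : ∀ n, 0 < a n)
    (hgap : Tendsto (fun n : ℕ => (a (n + 1) : ℝ) / a n) atTop atTop) :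
    (fun n : ℕ => (∫ x in (0:ℝ)..1, (∑ j ∈ Finset.Icc 1 n, f (a j * x)) ^ 2)
        - n * ∫ x in (0:ℝ)..1, (f (a 1 * x)) ^ 2)
      =O[atTop] (fun _ : ℕ => (1 : ℝ)) := by
  obtain rfl : f = cosPoly D c := funext hf
  obtain ⟨N, hN⟩ := eventually_atTop.1 <| eventually_forall_mul_lt_of_tendsto_div_atTop
    (u := fun n => (a n : ℝ)) (fun n => by exact_mod_cast hpos n) hgap D
  refine EventuallyConst.isBigO_one (eventuallyConst_atTop_nat.2 ⟨N, fun n hn => ?_⟩)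
  have hcross : ∀ j ∈ Icc 1 n,
      ∫ x in (0:ℝ)..1, cosPoly D c (a j * x) * cosPoly D c (a (n + 1) * x) = 0 := fun j hj =>
    integral_cosPoly_comp_mul_mul_eq_zero D c h0 (hpos j)
      (by exact_mod_cast hN n hn j (mem_Icc.1 hj).2)
  rw [integral_sum_Icc_succ_sq (fun j => by fun_prop), sum_eq_zero hcross,
    integral_cosPoly_comp_mul_sq D c (hpos _), integral_cosPoly_comp_mul_sq D c (hpos 1)]
  push_cast
  ring

open Real Filter in
/-- Under the large gap condition `a (n+1) / a n → ∞`, for a real, even, centered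
trigonometric polynomial `f ≢ 0` of degree `D`, `E[S_n ^ 2] = n E[X_1 ^ 2] + O(1)`,
where `S_n = ∑_{j=1}^n f (a_j U)` and `X_1 = f U`, `U` uniform on `[0,1]`. -/
theorem stmt13 (D : ℕ) (c : ℤ → ℝ) (hsym : ∀ d, c (-d) = c d) (h0 : c 0 = 0)
    (hne : ∃ d ∈ Finset.Icc (1:ℤ) D, c d ≠ 0)
    (f : ℝ → ℝ)
    (hf : ∀ x, f x = ∑ d ∈ Finset.Icc (-(D:ℤ)) D, c d * Real.cos (2 * π * d * x))
    (a : ℕ → ℕ) (hpos : ∀ n, 0 < a n)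
    (hgap : Tendsto (fun n : ℕ => (a (n + 1) : ℝ) / a n) atTop atTop) :
    (fun n : ℕ => (∫ x in (0:ℝ)..1, (∑ j ∈ Finset.Icc 1 n, f (a j * x)) ^ 2)
        - n * ∫ x in (0:ℝ)..1, (f (a 1 * x)) ^ 2)
      =O[atTop] (fun _ : ℕ => (1 : ℝ)) :=
  stmt13_general D c h0 f hf a hpos hgap
end
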